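/- For any relation R on values, the intersection of the simulation on communication trees with its opposite equals mutual simulation relative to the symmetrization of R: for all u, w, (u ⊑ᵣ w ∧ w ⊑ᵣ u) if and only if (u ⊑ᵢ w ∧ w ⊑ᵢ u), where I is the relation I f g ↔ (R f g ∧ R g f). -/

import Mathlib

/-! Coinductive communication trees, realized as the M-type of a polynomial
functor, together with the coinductively defined simulation relation. -/

/-- Shapes of nodes of communication trees. -/
inductive CommShape (V L : Type) : Type where
  | bot : CommShape V L
  | close : CommShape V L
  | label (k : L) : CommShape V L
  | pair : CommShape V L
  | val (f : V) : CommShape V L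

/-- Arities: `bot` and `close` have no children, `label` and `val` have one,
`pair` has two. -/
def commArity (V L : Type) : CommShape V L → Type
  | .bot => Empty
  | .close => Empty
  | .label _ => Unit
  | .pair => Bool
  | .val _ => Unit

/-- The polynomial functor of communication trees. -/
def CommP (V L : Type) : PFunctor := ⟨CommShape V L, commArity V L⟩

/-- The coinductive type of (possibly infinite) communication trees. -/
def Comm (V L : Type) : Type := (CommP V L).M

namespace Comm

variable {V L : Type}

/-- The empty communication. -/
def bot : Comm V L := PFunctor.M.mk ⟨CommShape.bot, Empty.elim⟩

/-- The close message. -/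
def close : Comm V L := PFunctor.M.mk ⟨CommShape.close, Empty.elim⟩

/-- A label followed by a continuation. -/
def label (k : L) (v : Comm V L) : Comm V L :=
  PFunctor.M.mk ⟨CommShape.label k, fun _ => v⟩

/-- A pair of communications (channel transmission). -/
def pair (v v' : Comm V L) : Comm V L :=
  PFunctor.M.mk ⟨CommShape.pair, fun b : Bool => if b then v else v'⟩

/-- A functional value followed by a continuation. -/
def val (f : V) (v : Comm V L) : Comm V L :=
  PFunctor.M.mk ⟨CommShape.val f, fun _ => v⟩

/-- One unfolding of the simulation relation: the clauses defining simulation. -/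
def SimStep (R : V → V → Prop) (S : Comm V L → Comm V L → Prop)
    (u w : Comm V L) : Prop :=
  u = Comm.bot ∨
  (u = Comm.close ∧ w = Comm.close) ∨
  (∃ k v v', u = Comm.label k v ∧ w = Comm.label k v' ∧ S v v') ∨
  (∃ a b a' b', u = Comm.pair a b ∧ w = Comm.pair a' b' ∧ S a a' ∧ S b b') ∨
  (∃ f g v v', u = Comm.val f v ∧ w = Comm.val g v' ∧ R f g ∧ S v v')

/-- Simulation modulo `R`: the largest relation closed under the clauses of
`SimStep`, i.e. the union of all post-fixed points. -/
def Sim (R : V → V → Prop) (u w : Comm V L) : Prop :=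
  ∃ S : Comm V L → Comm V L → Prop, (∀ a b, S a b → SimStep R S a b) ∧ S u w

/-- The height-`n` truncation of a communication tree. -/
def trunc : ℕ → Comm V L → Comm V L
  | 0, _ => Comm.bot
  | n + 1, w =>
    match PFunctor.M.dest w with
    | ⟨CommShape.bot, _⟩ => Comm.bot
    | ⟨CommShape.close, _⟩ => Comm.close
    | ⟨CommShape.label k, f⟩ => Comm.label k (trunc n (f ()))
    | ⟨CommShape.pair, f⟩ => Comm.pair (trunc n (f true)) (trunc n (f false))
    | ⟨CommShape.val g, f⟩ => Comm.val g (trunc n (f ()))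

end Comm

/-!
Mutual `R`-simulation is itself a post-fixed point of the clauses of simulation modulo
`I = R ∩ Rᵒᵖ`: if `u ⊑ᵣ w` and `w ⊑ᵣ u`, the two unfoldings take place at the same
constructor, and at a value node they provide both `R f g` and `R g f`. The converse
inclusion is monotonicity of simulation in the relation on values, as `I ⊆ R`.
-/

namespace Comm

variable {V L : Type}

theorem label_inj {k k' : L} {v v' : Comm V L} : label k v = label k' v' ↔ k = k' ∧ v = v' := by
  refine ⟨fun h => ?_, by rintro ⟨rfl, rfl⟩; rfl⟩
  have hmk := PFunctor.M.mk_inj h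
  injection hmk with hk hv
  injection hk with hk
  exact ⟨hk, congrFun hv ()⟩

theorem pair_inj {a b a' b' : Comm V L} : pair a b = pair a' b' ↔ a = a' ∧ b = b' := by
  refine ⟨fun h => ?_, by rintro ⟨rfl, rfl⟩; rfl⟩
  have hmk := PFunctor.M.mk_inj h
  injection hmk with _ hab
  exact ⟨congrFun hab true, congrFun hab false⟩

theorem val_inj {f f' : V} {v v' : Comm V L} : val f v = val f' v' ↔ f = f' ∧ v = v' := by
  refine ⟨fun h => ?_, by rintro ⟨rfl, rfl⟩; rfl⟩
  have hmk := PFunctor.M.mk_inj h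
  injection hmk with hf hv
  injection hf with hf
  exact ⟨hf, congrFun hv ()⟩

section SimStep

variable {R R' : V → V → Prop} {S S' : Comm V L → Comm V L → Prop}

theorem SimStep.mono (hR : R ≤ R') (hS : S ≤ S') {u w : Comm V L} (h : SimStep R S u w) :
    SimStep R' S' u w := by
  rcases h with h | h | ⟨k, v, v', hu, hw, hv⟩ | ⟨a, b, a', b', hu, hw, ha, hb⟩ |
    ⟨f, g, v, v', hu, hw, hfg, hv⟩
  exacts [.inl h, .inr (.inl h), .inr (.inr (.inl ⟨k, v, v', hu, hw, hS _ _ hv⟩)),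
    .inr (.inr (.inr (.inl ⟨a, b, a', b', hu, hw, hS _ _ ha, hS _ _ hb⟩))),
    .inr (.inr (.inr (.inr ⟨f, g, v, v', hu, hw, hR _ _ hfg, hS _ _ hv⟩)))]

theorem simStep_label_iff {k : L} {v w : Comm V L} :
    SimStep R S (label k v) w ↔ ∃ v', w = label k v' ∧ S v v' := by
  refine ⟨fun h => ?_, fun ⟨v', hw, hv⟩ => .inr (.inr (.inl ⟨k, v, v', rfl, hw, hv⟩))⟩
  rcases h with h | ⟨h, -⟩ | ⟨k', v₁, v', h, hw, hv⟩ | ⟨_, _, _, _, h, -⟩ | ⟨_, _, _, _, h, -⟩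
  · cases PFunctor.M.mk_inj h
  · cases PFunctor.M.mk_inj h
  · obtain ⟨rfl, rfl⟩ := label_inj.1 h
    exact ⟨v', hw, hv⟩
  · cases PFunctor.M.mk_inj h
  · cases PFunctor.M.mk_inj h

theorem simStep_pair_iff {a b w : Comm V L} :
    SimStep R S (pair a b) w ↔ ∃ a' b', w = pair a' b' ∧ S a a' ∧ S b b' := by
  refine ⟨fun h => ?_, fun ⟨a', b', hw, ha, hb⟩ =>
    .inr (.inr (.inr (.inl ⟨a, b, a', b', rfl, hw, ha, hb⟩)))⟩
  rcases h with h | ⟨h, -⟩ | ⟨_, _, _, h, -⟩ | ⟨a₁, b₁, a', b', h, hw, ha, hb⟩ |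
    ⟨_, _, _, _, h, -⟩
  · cases PFunctor.M.mk_inj h
  · cases PFunctor.M.mk_inj h
  · cases PFunctor.M.mk_inj h
  · obtain ⟨rfl, rfl⟩ := pair_inj.1 h
    exact ⟨a', b', hw, ha, hb⟩
  · cases PFunctor.M.mk_inj h

theorem simStep_val_iff {f : V} {v w : Comm V L} :
    SimStep R S (val f v) w ↔ ∃ g v', w = val g v' ∧ R f g ∧ S v v' := by
  refine ⟨fun h => ?_, fun ⟨g, v', hw, hfg, hv⟩ =>
    .inr (.inr (.inr (.inr ⟨f, g, v, v', rfl, hw, hfg, hv⟩)))⟩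
  rcases h with h | ⟨h, -⟩ | ⟨_, _, _, h, -⟩ | ⟨_, _, _, _, h, -⟩ |
    ⟨f₁, g, v₁, v', h, hw, hfg, hv⟩
  · cases PFunctor.M.mk_inj h
  · cases PFunctor.M.mk_inj h
  · cases PFunctor.M.mk_inj h
  · cases PFunctor.M.mk_inj h
  · obtain ⟨rfl, rfl⟩ := val_inj.1 h
    exact ⟨g, v', hw, hfg, hv⟩

theorem SimStep.and_swap {u w : Comm V L} (h₁ : SimStep R S u w) (h₂ : SimStep R' S' w u) :
    SimStep (fun f g => R f g ∧ R' g f) (fun a b => S a b ∧ S' b a) u w := by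
  rcases h₁ with rfl | h | ⟨k, v, v', rfl, rfl, hv⟩ | ⟨a, b, a', b', rfl, rfl, ha, hb⟩ |
    ⟨f, g, v, v', rfl, rfl, hfg, hv⟩
  · exact .inl rfl
  · exact .inr (.inl h)
  · obtain ⟨v₁, hv₁, hv'⟩ := simStep_label_iff.1 h₂
    obtain ⟨-, rfl⟩ := label_inj.1 hv₁
    exact simStep_label_iff.2 ⟨v', rfl, hv, hv'⟩
  · obtain ⟨a₁, b₁, hab, ha', hb'⟩ := simStep_pair_iff.1 h₂
    obtain ⟨rfl, rfl⟩ := pair_inj.1 hab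
    exact simStep_pair_iff.2 ⟨a', b', rfl, ⟨ha, ha'⟩, hb, hb'⟩
  · obtain ⟨f₁, v₁, hfv, hgf, hv'⟩ := simStep_val_iff.1 h₂
    obtain ⟨rfl, rfl⟩ := val_inj.1 hfv
    exact simStep_val_iff.2 ⟨g, v', rfl, ⟨hfg, hgf⟩, hv, hv'⟩

end SimStep

theorem Sim.unfold {R : V → V → Prop} {u w : Comm V L} (h : Sim R u w) :
    SimStep R (Sim R) u w := by
  obtain ⟨S, hS, huw⟩ := h
  exact (hS u w huw).mono le_rfl fun a b hab => ⟨S, hS, hab⟩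

theorem Sim.mono {R R' : V → V → Prop} (hR : R ≤ R') {u w : Comm V L} (h : Sim R u w) :
    Sim R' u w := by
  obtain ⟨S, hS, huw⟩ := h
  exact ⟨S, fun a b hab => (hS a b hab).mono hR le_rfl, huw⟩

theorem Sim.sym_of_mutual {R : V → V → Prop} {u w : Comm V L} (huw : Sim R u w)
    (hwu : Sim R w u) : Sim (fun f g => R f g ∧ R g f) u w :=
  ⟨fun a b => Sim R a b ∧ Sim R b a, fun _ _ h => h.1.unfold.and_swap h.2.unfold, huw, hwu⟩

end Comm

/-- Mutual simulation modulo `R` coincides with mutual simulation modulo the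
symmetrization of `R`. -/
theorem stmt_15 {V L : Type} (R : V → V → Prop) (u w : Comm V L) :
    (Comm.Sim R u w ∧ Comm.Sim R w u) ↔
      (Comm.Sim (fun f g => R f g ∧ R g f) u w ∧
        Comm.Sim (fun f g => R f g ∧ R g f) w u) := by
  constructor
  · rintro ⟨huw, hwu⟩
    exact ⟨huw.sym_of_mutual hwu, hwu.sym_of_mutual huw⟩
  · rintro ⟨huw, hwu⟩
    exact ⟨huw.mono fun _ _ => And.left, hwu.mono fun _ _ => And.left⟩
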